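/- arXiv:2411.16699 — 5 statements merged into one kernel-verified Lean document; each statement's English description precedes it below -/
import Mathlib

section
/- The rectangle R_c := [0, b₁] × [0, b₂] is positively invariant for the generalized Andrecut–Kauffman map: if (x, y) ∈ [0, b₁] × [0, b₂], then F_{α₁,α₂}(x, y) ∈ [0, b₁] × [0, b₂]. -/
/-- The generalized Andrecut–Kauffman map with reaction rates `α₁`, `α₂`,
degradation parameter `β`, coupling `ε`, and multimerization exponent `n`. -/
noncomputable def AK (α₁ α₂ β ε : ℝ) (n : ℕ) : ℝ × ℝ → ℝ × ℝ :=
  fun p =>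
    (α₁ / (1 + (1 - ε) * p.1 ^ n + ε * p.2 ^ n) + β * p.1,
     α₂ / (1 + ε * p.1 ^ n + (1 - ε) * p.2 ^ n) + β * p.2)

lemma aux_comp (α β c x D : ℝ) (hα : 0 ≤ α) (hβ0 : 0 ≤ β) (hβ1 : β < 1)
    (hc : 0 < c) (hx0 : 0 ≤ x) (hx1 : x ≤ (α + c) / (1 - β)) (hD : 1 ≤ D) :
    α / D + β * x ∈ Set.Icc (0 : ℝ) ((α + c) / (1 - β)) := by
  have hD0 : 0 < D := lt_of_lt_of_le one_pos hD
  have h1β : 0 < 1 - β := by linarith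
  constructor
  · positivity
  · have h1 : α / D ≤ α := by
      rw [div_le_iff₀ hD0]; nlinarith
    have h2 : β * x ≤ β * ((α + c) / (1 - β)) :=
      mul_le_mul_of_nonneg_left hx1 hβ0
    have h3 : α + β * ((α + c) / (1 - β)) ≤ (α + c) / (1 - β) := by
      have hb : (1 - β) * ((α + c) / (1 - β)) = α + c := by
        field_simp
      nlinarith [hb]
    linarith

/-- The rectangle `[0, b₁] × [0, b₂]` is positively invariant for the map. -/
theorem stmt_5 (α₁ α₂ β ε : ℝ) (n : ℕ) (hα₁ : 0 ≤ α₁) (hα₂ : 0 ≤ α₂)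
    (hβ0 : 0 ≤ β) (hβ1 : β < 1) (hε0 : 0 ≤ ε) (hε1 : ε ≤ 1) (hn : 1 ≤ n)
    (c₁ c₂ : ℝ) (hc₁ : 0 < c₁) (hc₂ : 0 < c₂)
    (x y : ℝ)
    (hmem : (x, y) ∈ Set.Icc (0 : ℝ) ((α₁ + c₁) / (1 - β)) ×ˢ
      Set.Icc (0 : ℝ) ((α₂ + c₂) / (1 - β))) :
    AK α₁ α₂ β ε n (x, y) ∈ Set.Icc (0 : ℝ) ((α₁ + c₁) / (1 - β)) ×ˢ
      Set.Icc (0 : ℝ) ((α₂ + c₂) / (1 - β)) := by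
  obtain ⟨⟨hx0, hx1⟩, hy0, hy1⟩ := hmem
  have hxn : 0 ≤ x ^ n := pow_nonneg hx0 n
  have hyn : 0 ≤ y ^ n := pow_nonneg hy0 n
  have hD1 : (1 : ℝ) ≤ 1 + (1 - ε) * x ^ n + ε * y ^ n := by nlinarith
  have hD2 : (1 : ℝ) ≤ 1 + ε * x ^ n + (1 - ε) * y ^ n := by nlinarith
  exact ⟨aux_comp α₁ β c₁ x _ hα₁ hβ0 hβ1 hc₁ hx0 hx1 hD1,
    aux_comp α₂ β c₂ y _ hα₂ hβ0 hβ1 hc₂ hy0 hy1 hD2⟩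
end

section
/- The rectangle R_c := [0, b₁] × [0, b₂] is an absorbing set for the generalized Andrecut–Kauffman map restricted to the closed first quadrant: for every initial point (x₀, y₀) with x₀ ≥ 0 and y₀ ≥ 0, there exists N₀ ∈ ℕ such that for all t ≥ N₀ the t-th iterate F_{α₁,α₂}ᵗ(x₀, y₀) lies in [0, b₁] × [0, b₂]. -/
/-- The rectangle `[0, b₁] × [0, b₂]` is an absorbing set for the map restricted
to the closed first quadrant. -/
theorem stmt_6 (α₁ α₂ β ε : ℝ) (n : ℕ) (hα₁ : 0 ≤ α₁) (hα₂ : 0 ≤ α₂)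
    (hβ0 : 0 ≤ β) (hβ1 : β < 1) (hε0 : 0 ≤ ε) (hε1 : ε ≤ 1) (hn : 1 ≤ n)
    (c₁ c₂ : ℝ) (hc₁ : 0 < c₁) (hc₂ : 0 < c₂)
    (x₀ y₀ : ℝ) (hx₀ : 0 ≤ x₀) (hy₀ : 0 ≤ y₀) :
    ∃ N₀ : ℕ, ∀ t : ℕ, N₀ ≤ t →
      (AK α₁ α₂ β ε n)^[t] (x₀, y₀) ∈
        Set.Icc (0 : ℝ) ((α₁ + c₁) / (1 - β)) ×ˢ
          Set.Icc (0 : ℝ) ((α₂ + c₂) / (1 - β)) := by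
  have hb : (0:ℝ) < 1 - β := by linarith
  set f := AK α₁ α₂ β ε n with hf
  have key : ∀ t, 0 ≤ (f^[t] (x₀, y₀)).1 ∧ 0 ≤ (f^[t] (x₀, y₀)).2 ∧
      (f^[t] (x₀, y₀)).1 ≤ α₁ / (1 - β) + β ^ t * x₀ ∧
      (f^[t] (x₀, y₀)).2 ≤ α₂ / (1 - β) + β ^ t * y₀ := by
    intro t
    induction t with
    | zero =>
      refine ⟨hx₀, hy₀, ?_, ?_⟩ <;> simp <;>
        positivity
    | succ t ih =>
      obtain ⟨h1, h2, h3, h4⟩ := ih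
      rw [Function.iterate_succ_apply']
      set p := f^[t] (x₀, y₀) with hp
      have hxn := pow_nonneg h1 n
      have hyn := pow_nonneg h2 n
      have hD1 : (1:ℝ) ≤ 1 + (1 - ε) * p.1 ^ n + ε * p.2 ^ n := by nlinarith
      have hD2 : (1:ℝ) ≤ 1 + ε * p.1 ^ n + (1 - ε) * p.2 ^ n := by nlinarith
      have hd1 := div_le_self hα₁ hD1
      have hd2 := div_le_self hα₂ hD2
      have hdn1 : 0 ≤ α₁ / (1 + (1 - ε) * p.1 ^ n + ε * p.2 ^ n) :=
        div_nonneg hα₁ (by linarith)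
      have hdn2 : 0 ≤ α₂ / (1 + ε * p.1 ^ n + (1 - ε) * p.2 ^ n) :=
        div_nonneg hα₂ (by linarith)
      have heq1 : α₁ + β * (α₁ / (1 - β)) = α₁ / (1 - β) := by
        field_simp; ring
      have heq2 : α₂ + β * (α₂ / (1 - β)) = α₂ / (1 - β) := by
        field_simp; ring
      refine ⟨add_nonneg hdn1 (mul_nonneg hβ0 h1),
        add_nonneg hdn2 (mul_nonneg hβ0 h2), ?_, ?_⟩
      · show α₁ / _ + β * p.1 ≤ _
        have hβp : β * p.1 ≤ β * (α₁ / (1 - β) + β ^ t * x₀) :=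
          mul_le_mul_of_nonneg_left h3 hβ0
        have hps : β ^ (t + 1) * x₀ = β * (β ^ t * x₀) := by ring
        rw [hps]
        nlinarith
      · show α₂ / _ + β * p.2 ≤ _
        have hβp : β * p.2 ≤ β * (α₂ / (1 - β) + β ^ t * y₀) :=
          mul_le_mul_of_nonneg_left h4 hβ0
        have hps : β ^ (t + 1) * y₀ = β * (β ^ t * y₀) := by ring
        rw [hps]
        nlinarith
  have hβabs : Filter.Tendsto (fun t : ℕ => β ^ t) Filter.atTop (nhds 0) :=
    tendsto_pow_atTop_nhds_zero_of_lt_one hβ0 hβ1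
  have t1 : Filter.Tendsto (fun t : ℕ => β ^ t * x₀) Filter.atTop (nhds 0) := by
    simpa using hβabs.mul_const x₀
  have t2 : Filter.Tendsto (fun t : ℕ => β ^ t * y₀) Filter.atTop (nhds 0) := by
    simpa using hβabs.mul_const y₀
  have e1 : ∀ᶠ t in Filter.atTop, β ^ t * x₀ ≤ c₁ / (1 - β) :=
    t1.eventually_le_const (div_pos hc₁ hb)
  have e2 : ∀ᶠ t in Filter.atTop, β ^ t * y₀ ≤ c₂ / (1 - β) :=
    t2.eventually_le_const (div_pos hc₂ hb)
  obtain ⟨N, hN⟩ := Filter.eventually_atTop.mp (e1.and e2)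
  refine ⟨N, fun t ht => ?_⟩
  obtain ⟨h1, h2, h3, h4⟩ := key t
  obtain ⟨hN1, hN2⟩ := hN t ht
  constructor
  · exact ⟨h1, by rw [add_div]; linarith⟩
  · exact ⟨h2, by rw [add_div]; linarith⟩
end

section
/- For every initial point (x₀, y₀) with x₀ ≥ 0 and y₀ ≥ 0, and for every t ∈ ℕ, the first coordinate of the t-th iterate F_{α₁,α₂}ᵗ(x₀, y₀) is at most max(b₁, x₀ − t·c₁), where b₁ := (α₁ + c₁)/(1 − β). In particular, the x-coordinate of the trajectory drops below b₁ after at most ⌈(x₀ − b₁)/c₁⌉ iterations and remains at most b₁ thereafter. -/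
/-- The `x`-coordinate of the `t`-th iterate is at most `max b₁ (x₀ - t·c₁)`;
in particular the trajectory's `x`-coordinate is at most `b₁` for all
`t ≥ ⌈(x₀ - b₁)/c₁⌉`. -/
theorem stmt_7 (α₁ α₂ β ε : ℝ) (n : ℕ) (hα₁ : 0 ≤ α₁) (hα₂ : 0 ≤ α₂)
    (hβ0 : 0 ≤ β) (hβ1 : β < 1) (hε0 : 0 ≤ ε) (hε1 : ε ≤ 1) (hn : 1 ≤ n)
    (c₁ : ℝ) (hc₁ : 0 < c₁)
    (x₀ y₀ : ℝ) (hx₀ : 0 ≤ x₀) (hy₀ : 0 ≤ y₀) :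
    (∀ t : ℕ, ((AK α₁ α₂ β ε n)^[t] (x₀, y₀)).1 ≤
      max ((α₁ + c₁) / (1 - β)) (x₀ - t * c₁)) ∧
    (∀ t : ℕ, ⌈(x₀ - (α₁ + c₁) / (1 - β)) / c₁⌉₊ ≤ t →
      ((AK α₁ α₂ β ε n)^[t] (x₀, y₀)).1 ≤ (α₁ + c₁) / (1 - β)) := by
  have h1β : (0:ℝ) < 1 - β := by linarith
  set b₁ : ℝ := (α₁ + c₁) / (1 - β) with hb₁
  have hb₁eq : b₁ * (1 - β) = α₁ + c₁ := div_mul_cancel₀ _ (ne_of_gt h1β)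
  have key : ∀ t : ℕ, 0 ≤ ((AK α₁ α₂ β ε n)^[t] (x₀, y₀)).1 ∧
      0 ≤ ((AK α₁ α₂ β ε n)^[t] (x₀, y₀)).2 ∧
      ((AK α₁ α₂ β ε n)^[t] (x₀, y₀)).1 ≤ max b₁ (x₀ - t * c₁) := by
    intro t
    induction t with
    | zero =>
      refine ⟨hx₀, hy₀, ?_⟩
      simp only [Function.iterate_zero, id_eq, Nat.cast_zero, zero_mul, sub_zero]
      exact le_max_right _ _
    | succ t ih =>
      obtain ⟨hx, hy, hbd⟩ := ih
      set p := (AK α₁ α₂ β ε n)^[t] (x₀, y₀) with hp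
      have hiter : (AK α₁ α₂ β ε n)^[t+1] (x₀, y₀) = AK α₁ α₂ β ε n p := by
        rw [Function.iterate_succ_apply']
      rw [hiter]
      have hxn : (0:ℝ) ≤ p.1 ^ n := pow_nonneg hx n
      have hyn : (0:ℝ) ≤ p.2 ^ n := pow_nonneg hy n
      have hD1 : (1:ℝ) ≤ 1 + (1 - ε) * p.1 ^ n + ε * p.2 ^ n := by
        nlinarith
      have hD2 : (1:ℝ) ≤ 1 + ε * p.1 ^ n + (1 - ε) * p.2 ^ n := by
        nlinarith
      have hD1' : (0:ℝ) < 1 + (1 - ε) * p.1 ^ n + ε * p.2 ^ n := lt_of_lt_of_le one_pos hD1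
      have hD2' : (0:ℝ) < 1 + ε * p.1 ^ n + (1 - ε) * p.2 ^ n := lt_of_lt_of_le one_pos hD2
      refine ⟨?_, ?_, ?_⟩
      · exact add_nonneg (div_nonneg hα₁ hD1'.le) (mul_nonneg hβ0 hx)
      · exact add_nonneg (div_nonneg hα₂ hD2'.le) (mul_nonneg hβ0 hy)
      · have hstep : (AK α₁ α₂ β ε n p).1 ≤ α₁ + β * p.1 := by
          have : α₁ / (1 + (1 - ε) * p.1 ^ n + ε * p.2 ^ n) ≤ α₁ :=
            div_le_self hα₁ hD1
          simp only [AK]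
          linarith
        rcases le_or_gt p.1 b₁ with h | h
        · have : α₁ + β * p.1 ≤ b₁ := by nlinarith
          exact le_trans hstep (le_trans this (le_max_left _ _))
        · have hp1 : p.1 ≤ x₀ - t * c₁ := by
            rcases max_cases b₁ (x₀ - t * c₁) with ⟨he, _⟩ | ⟨he, _⟩
            · linarith [hbd, he ▸ hbd]
            · linarith [he ▸ hbd]
          have : α₁ + β * p.1 ≤ x₀ - (t + 1 : ℕ) * c₁ := by
            push_cast
            nlinarith
          exact le_trans hstep (le_trans this (le_max_right _ _))
  refine ⟨fun t => (key t).2.2, fun t ht => ?_⟩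
  have h1 := (key t).2.2
  have h2 : x₀ - t * c₁ ≤ b₁ := by
    have hle : (x₀ - b₁) / c₁ ≤ (t : ℝ) := by
      calc (x₀ - b₁) / c₁ ≤ (⌈(x₀ - b₁) / c₁⌉₊ : ℝ) := Nat.le_ceil _
        _ ≤ (t : ℝ) := by exact_mod_cast ht
    have := (div_le_iff₀ hc₁).mp hle
    linarith
  calc _ ≤ max b₁ (x₀ - t * c₁) := h1
    _ ≤ b₁ := max_le le_rfl h2
end

section
/- Every forward trajectory of the generalized Andrecut–Kauffman map starting in the closed first quadrant is bounded: for every (x₀, y₀) with x₀ ≥ 0 and y₀ ≥ 0, the set {F_{α₁,α₂}ᵗ(x₀, y₀) : t ∈ ℕ} is a bounded subset of ℝ². -/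
/-- Every forward trajectory starting in the closed first quadrant is bounded. -/
theorem stmt_8 (α₁ α₂ β ε : ℝ) (n : ℕ) (hα₁ : 0 ≤ α₁) (hα₂ : 0 ≤ α₂)
    (hβ0 : 0 ≤ β) (hβ1 : β < 1) (hε0 : 0 ≤ ε) (hε1 : ε ≤ 1) (hn : 1 ≤ n)
    (x₀ y₀ : ℝ) (hx₀ : 0 ≤ x₀) (hy₀ : 0 ≤ y₀) :
    Bornology.IsBounded
      (Set.range fun t : ℕ => (AK α₁ α₂ β ε n)^[t] (x₀, y₀)) := by
  have hb : 0 < 1 - β := by linarith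
  set Mx : ℝ := max x₀ (α₁ / (1 - β)) with hMx
  set My : ℝ := max y₀ (α₂ / (1 - β)) with hMy
  have hα₁M : α₁ ≤ (1 - β) * Mx := by
    have : α₁ / (1 - β) ≤ Mx := le_max_right _ _
    rw [div_le_iff₀ hb] at this; linarith
  have hα₂M : α₂ ≤ (1 - β) * My := by
    have : α₂ / (1 - β) ≤ My := le_max_right _ _
    rw [div_le_iff₀ hb] at this; linarith
  have key : ∀ t : ℕ, (AK α₁ α₂ β ε n)^[t] (x₀, y₀) ∈
      Set.Icc (0:ℝ) Mx ×ˢ Set.Icc (0:ℝ) My := by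
    intro t
    induction t with
    | zero =>
      simp only [Function.iterate_zero, id_eq, Set.mem_prod, Set.mem_Icc]
      exact ⟨⟨hx₀, le_max_left _ _⟩, ⟨hy₀, le_max_left _ _⟩⟩
    | succ t ih =>
      rw [Function.iterate_succ_apply']
      set p := (AK α₁ α₂ β ε n)^[t] (x₀, y₀) with hp
      obtain ⟨⟨hx1, hx2⟩, hy1, hy2⟩ := ih
      have hxn : (0:ℝ) ≤ p.1 ^ n := pow_nonneg hx1 n
      have hyn : (0:ℝ) ≤ p.2 ^ n := pow_nonneg hy1 n
      have hd1 : (1:ℝ) ≤ 1 + (1 - ε) * p.1 ^ n + ε * p.2 ^ n := by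
        nlinarith
      have hd2 : (1:ℝ) ≤ 1 + ε * p.1 ^ n + (1 - ε) * p.2 ^ n := by
        nlinarith
      have h1 : α₁ / (1 + (1 - ε) * p.1 ^ n + ε * p.2 ^ n) ≤ α₁ :=
        div_le_self hα₁ hd1
      have h2 : α₂ / (1 + ε * p.1 ^ n + (1 - ε) * p.2 ^ n) ≤ α₂ :=
        div_le_self hα₂ hd2
      have h1' : 0 ≤ α₁ / (1 + (1 - ε) * p.1 ^ n + ε * p.2 ^ n) :=
        div_nonneg hα₁ (by linarith)
      have h2' : 0 ≤ α₂ / (1 + ε * p.1 ^ n + (1 - ε) * p.2 ^ n) :=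
        div_nonneg hα₂ (by linarith)
      have hbx : β * p.1 ≤ β * Mx := mul_le_mul_of_nonneg_left hx2 hβ0
      have hby : β * p.2 ≤ β * My := mul_le_mul_of_nonneg_left hy2 hβ0
      refine ⟨⟨?_, ?_⟩, ?_, ?_⟩
      · exact add_nonneg h1' (mul_nonneg hβ0 hx1)
      · show α₁ / (1 + (1 - ε) * p.1 ^ n + ε * p.2 ^ n) + β * p.1 ≤ Mx
        nlinarith
      · exact add_nonneg h2' (mul_nonneg hβ0 hy1)
      · show α₂ / (1 + ε * p.1 ^ n + (1 - ε) * p.2 ^ n) + β * p.2 ≤ My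
        nlinarith
  have hsub : Set.range (fun t : ℕ => (AK α₁ α₂ β ε n)^[t] (x₀, y₀)) ⊆
      Set.Icc (0:ℝ) Mx ×ˢ Set.Icc (0:ℝ) My := by
    rintro _ ⟨t, rfl⟩; exact key t
  exact (Metric.isBounded_Icc _ _ |>.prod (Metric.isBounded_Icc _ _)).subset hsub
end

section
/- If α₁, α₂ ∈ [0, 100] and β ∈ [0, 1/2], then every periodic point of the generalized Andrecut–Kauffman map in the closed first quadrant is contained in the square [0, 200] × [0, 200]: if x ≥ 0, y ≥ 0, p ≥ 1 and F_{α₁,α₂}ᵖ(x, y) = (x, y), then x ≤ 200 and y ≤ 200. -/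
/-- If `α₁, α₂ ∈ [0, 100]` and `β ∈ [0, 1/2]`, then every periodic point of the
map in the closed first quadrant is contained in `[0, 200] × [0, 200]`. -/
theorem stmt_11 (α₁ α₂ β ε : ℝ) (n : ℕ)
    (hα₁ : α₁ ∈ Set.Icc (0 : ℝ) 100) (hα₂ : α₂ ∈ Set.Icc (0 : ℝ) 100)
    (hβ0 : 0 ≤ β) (hβ : β ≤ 1 / 2) (hε0 : 0 ≤ ε) (hε1 : ε ≤ 1) (hn : 1 ≤ n)
    (x y : ℝ) (hx : 0 ≤ x) (hy : 0 ≤ y) (p : ℕ) (hp : 1 ≤ p)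
    (hper : (AK α₁ α₂ β ε n)^[p] (x, y) = (x, y)) :
    x ≤ 200 ∧ y ≤ 200 := by
  obtain ⟨hα₁0, hα₁1⟩ := hα₁
  obtain ⟨hα₂0, hα₂1⟩ := hα₂
  -- key step lemma
  have step : ∀ α a b : ℝ, 0 ≤ α → α ≤ 100 → 0 ≤ a → 0 ≤ b → ∀ e : ℝ, 0 ≤ e → e ≤ 1 →
      0 ≤ α / (1 + (1 - e) * a ^ n + e * b ^ n) + β * a ∧
      α / (1 + (1 - e) * a ^ n + e * b ^ n) + β * a ≤ 100 + a / 2 := by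
    intro α a b hα0 hα100 ha hb e he0 he1
    have hd : (1 : ℝ) ≤ 1 + (1 - e) * a ^ n + e * b ^ n := by
      nlinarith [pow_nonneg ha n, pow_nonneg hb n]
    have hd0 : (0 : ℝ) < 1 + (1 - e) * a ^ n + e * b ^ n := lt_of_lt_of_le one_pos hd
    have h1 : α / (1 + (1 - e) * a ^ n + e * b ^ n) ≤ α := by
      calc α / (1 + (1 - e) * a ^ n + e * b ^ n) ≤ α / 1 := by
            apply div_le_div_of_nonneg_left hα0 one_pos hd
        _ = α := div_one α
    constructor
    · have := div_nonneg hα0 hd0.le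
      nlinarith
    · nlinarith
  -- invariant by induction
  have main : ∀ k : ℕ,
      0 ≤ ((AK α₁ α₂ β ε n)^[k] (x, y)).1 ∧ 0 ≤ ((AK α₁ α₂ β ε n)^[k] (x, y)).2 ∧
      ((AK α₁ α₂ β ε n)^[k] (x, y)).1 - 200 ≤ (x - 200) / 2 ^ k ∧
      ((AK α₁ α₂ β ε n)^[k] (x, y)).2 - 200 ≤ (y - 200) / 2 ^ k := by
    intro k
    induction k with
    | zero => simpa using ⟨hx, hy⟩
    | succ k ih =>
      rw [Function.iterate_succ_apply']
      rcases hq : (AK α₁ α₂ β ε n)^[k] (x, y) with ⟨a, b⟩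
      rw [hq] at ih
      obtain ⟨ha, hb, hxa, hyb⟩ := ih
      simp only at ha hb hxa hyb
      have h1 := step α₁ a b hα₁0 hα₁1 ha hb ε hε0 hε1
      have h2 := step α₂ b a hα₂0 hα₂1 hb ha ε hε0 hε1
      have eden : 1 + ε * a ^ n + (1 - ε) * b ^ n
          = 1 + (1 - ε) * b ^ n + ε * a ^ n := by ring
      simp only [AK, eden]
      have ex : (x - 200) / 2 ^ (k + 1) = (x - 200) / 2 ^ k / 2 := by
        rw [pow_succ]; ring
      have ey : (y - 200) / 2 ^ (k + 1) = (y - 200) / 2 ^ k / 2 := by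
        rw [pow_succ]; ring
      exact ⟨h1.1, h2.1, by rw [ex]; linarith [h1.2], by rw [ey]; linarith [h2.2]⟩
  have hm := main p
  rw [hper] at hm
  obtain ⟨_, _, hx2, hy2⟩ := hm
  have hpk : (1:ℝ) < 2 ^ p := by
    calc (1:ℝ) < 2 ^ 1 := by norm_num
      _ ≤ 2 ^ p := pow_le_pow_right₀ (by norm_num) hp
  have h2p : (0:ℝ) < 2 ^ p := by positivity
  simp only at hx2 hy2
  rw [le_div_iff₀ h2p] at hx2 hy2
  constructor <;> nlinarith
end
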